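/- Let p⃗ ∈ (0,∞]ⁿ with p₊ := max{p₁,…,pₙ} and p₋ := min{p₁,…,pₙ}, and let B_k = AᵏΔ with |B_k| = bᵏ. Then there exists a positive constant C such that for every k ∈ ℤ, ‖χ_{B_k}‖_{L^{p⃗}}^{-1} ≤ C max{ b^{-k/p₋}, b^{-k/p₊} }. -/

import Mathlib

open MeasureTheory ENNReal Set Filter Pointwise
open scoped Classical

noncomputable section

/-- One step of the iterated mixed Lebesgue norm: the `L^p(ℝ)`-norm in one real
variable, with the usual modification (essential supremum) when `p = ∞`. -/
def lpStep (p : ℝ≥0∞) (g : ℝ → ℝ≥0∞) : ℝ≥0∞ :=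
  if p = ∞ then essSup g volume
  else (∫⁻ t, (g t) ^ p.toReal) ^ (1 / p.toReal)

/-- The iterated mixed Lebesgue norm of an `ℝ≥0∞`-valued function on `ℝⁿ`:
the innermost integral is in the first variable, with exponent `p 0`. -/
def mixedNorm : (n : ℕ) → (Fin n → ℝ≥0∞) → ((Fin n → ℝ) → ℝ≥0∞) → ℝ≥0∞
  | 0, _, F => F finZeroElim
  | (n + 1), p, F =>
      mixedNorm n (fun i => p i.succ) (fun x => lpStep (p 0) (fun t => F (Fin.cons t x)))

/-- The mixed-norm Lebesgue quasi-norm `‖f‖_{L^{p⃗}}` of a real-valued function. -/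
def mixedLp {n : ℕ} (p : Fin n → ℝ≥0∞) (f : (Fin n → ℝ) → ℝ) : ℝ≥0∞ :=
  mixedNorm n p fun x => ENNReal.ofReal |f x|

/-- `A` is an expansive dilation: every (complex) eigenvalue has modulus `> 1`. -/
def IsExpansive {n : ℕ} (A : Matrix (Fin n) (Fin n) ℝ) : Prop :=
  ∀ z ∈ spectrum ℂ (A.map (algebraMap ℝ ℂ)), 1 < ‖z‖

/-- The dilated set `B_k := A^k Δ`, `k ∈ ℤ`. -/
def Bk {n : ℕ} (A : Matrix (Fin n) (Fin n) ℝ) (Δ : Set (Fin n → ℝ)) (k : ℤ) :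
    Set (Fin n → ℝ) :=
  (fun x => (A ^ k).mulVec x) '' Δ

/-- The dilated ball `x₀ + B_k`. -/
def dBall {n : ℕ} (A : Matrix (Fin n) (Fin n) ℝ) (Δ : Set (Fin n → ℝ))
    (x₀ : Fin n → ℝ) (k : ℤ) : Set (Fin n → ℝ) :=
  (fun y => x₀ + y) '' Bk A Δ k

/-- `‖χ_S‖_{L^{p⃗}}`, the mixed norm of the characteristic function of `S`. -/
def chiNorm {n : ℕ} (p : Fin n → ℝ≥0∞) (S : Set (Fin n → ℝ)) : ℝ≥0∞ :=
  mixedNorm n p (S.indicator fun _ => (1 : ℝ≥0∞))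

/-- The standing assumptions on an expansive dilation `A` and the associated
ellipsoid `Δ` (of Lebesgue measure `1`, with `Δ ⊂ rΔ ⊂ AΔ`). -/
structure IsDilationSetup {n : ℕ} (A : Matrix (Fin n) (Fin n) ℝ)
    (Δ : Set (Fin n → ℝ)) (r : ℝ) : Prop where
  expansive : IsExpansive A
  det_isUnit : IsUnit A.det
  isOpen : IsOpen Δ
  zero_mem : 0 ∈ Δ
  bounded : Bornology.IsBounded Δ
  convex : Convex ℝ Δ
  symmetric : ∀ x ∈ Δ, -x ∈ Δ
  volume_eq_one : volume Δ = 1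
  one_lt_r : 1 < r
  subset_smul : Δ ⊆ r • Δ
  smul_subset : r • Δ ⊆ (fun x => A.mulVec x) '' Δ

/-! A centred convex body `K ⊆ ℝⁿ` behaves, for mixed norms, like a box. Its fibres in the first
coordinate are intervals, the central fibre is the longest (convexity and symmetry), and over the
projection of `K` shrunk by `1/2` every fibre is at least half as long as the central one. Iterating
over the coordinates produces lengths `aᵢ` with `|K| ≲ ∏ aᵢ` and `∏ aᵢ^{1/pᵢ} ≤ ‖χ_K‖_{L^{p⃗}}`.
If `K` contains a fixed ball the `aᵢ` are bounded below, whence `∏ aᵢ^{1/pᵢ} ≳ (∏ aᵢ)^{1/p₊}`; if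
`K` lies in a fixed ball they are bounded above, whence `∏ aᵢ^{1/pᵢ} ≳ (∏ aᵢ)^{1/p₋}`. Since
`Δ ⊆ AΔ`, the sets `B_k` increase with `k`, so `B_k ⊇ Δ` for `k ≥ 0` and `B_k ⊆ Δ` for `k < 0`,
and `|B_k| = bᵏ`. -/

open Metric

section ConvexBody

variable {E F : Type*} [NormedAddCommGroup E] [NormedSpace ℝ E]
  [NormedAddCommGroup F] [NormedSpace ℝ F]

structure IsCenteredConvexBody (K : Set E) (ρ R : ℝ) : Prop where
  isOpen : IsOpen K
  convex : Convex ℝ K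
  neg_mem : ∀ x ∈ K, -x ∈ K
  radius_pos : 0 < ρ
  ball_subset : ball 0 ρ ⊆ K
  subset_ball : K ⊆ ball 0 R

namespace IsCenteredConvexBody

variable {K : Set E} {ρ R : ℝ}

lemma preimage (h : IsCenteredConvexBody K ρ R) (e : F ≃ₗᵢ[ℝ] E) :
    IsCenteredConvexBody (e ⁻¹' K) ρ R where
  isOpen := h.isOpen.preimage e.continuous
  convex := h.convex.linear_preimage e.toLinearEquiv.toLinearMap
  neg_mem x hx := by simpa using h.neg_mem _ hx
  radius_pos := h.radius_pos
  ball_subset := by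
    simpa [LinearIsometryEquiv.preimage_ball] using preimage_mono (f := e) h.ball_subset
  subset_ball := by
    simpa [LinearIsometryEquiv.preimage_ball] using preimage_mono (f := e) h.subset_ball

lemma exists_image (h : IsCenteredConvexBody K ρ R) (f : E ≃L[ℝ] F) :
    ∃ ρ' R', IsCenteredConvexBody (f '' K) ρ' R' := by
  have hopen : IsOpen (f '' K) := f.isOpenMap _ h.isOpen
  obtain ⟨ρ', hρ', hball⟩ := Metric.isOpen_iff.mp hopen 0
    ⟨0, h.ball_subset (mem_ball_self h.radius_pos), map_zero f⟩
  obtain ⟨R', hR'⟩ :=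
    (f.lipschitz.isBounded_image (isBounded_ball.subset h.subset_ball)).subset_ball 0
  exact ⟨ρ', R', hopen, h.convex.linear_image (f : E →ₗ[ℝ] F),
    by rintro - ⟨x, hx, rfl⟩; exact ⟨-x, h.neg_mem x hx, map_neg f x⟩, hρ', hball, hR'⟩

end IsCenteredConvexBody

end ConvexBody

section Fiber

variable {E : Type*}

def fiber (S : Set (ℝ × E)) (y : E) : Set ℝ := {t | (t, y) ∈ S}

section AddCommGroup

variable [AddCommGroup E] [Module ℝ E] {S : Set (ℝ × E)}

lemma sub_div_two_mem_fiber_zero (hS : Convex ℝ S) (hneg : ∀ z ∈ S, -z ∈ S) {y : E} {s t : ℝ}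
    (hs : s ∈ fiber S y) (ht : t ∈ fiber S y) : (s - t) / 2 ∈ fiber S 0 := by
  have hmid := hS hs (hneg _ ht) (by norm_num : (0 : ℝ) ≤ 1 / 2) (by norm_num : (0 : ℝ) ≤ 1 / 2)
    (by norm_num)
  have hpt : (1 / 2 : ℝ) • (s, y) + (1 / 2 : ℝ) • -(t, y) = ((s - t) / 2, 0) := by
    ext
    · simp only [Prod.fst_add, Prod.smul_fst, Prod.fst_neg, smul_eq_mul]
      ring
    · simp
  rwa [hpt] at hmid

/-- For `s, t` in the fibre over `y`, the points `±(s - t) / 2` lie in the fibre over `0`, which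
is convex; so that fibre is at least as long as the diameter of the fibre over `y`. -/
lemma volume_fiber_le_volume_fiber_zero (hS : Convex ℝ S) (hneg : ∀ z ∈ S, -z ∈ S) (y : E) :
    volume (fiber S y) ≤ volume (fiber S 0) := by
  refine (Real.volume_le_diam _).trans (ediam_le fun s hs t ht => ?_)
  have hconv : Convex ℝ (fiber S 0) := hS.linear_preimage (LinearMap.inl ℝ ℝ E)
  have hsub : uIcc ((t - s) / 2) ((s - t) / 2) ⊆ fiber S 0 := by
    rw [← segment_eq_uIcc]
    exact hconv.segment_subset (sub_div_two_mem_fiber_zero hS hneg ht hs)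
      (sub_div_two_mem_fiber_zero hS hneg hs ht)
  calc edist s t = volume (uIcc ((t - s) / 2) ((s - t) / 2)) := by
        rw [Real.volume_interval, edist_dist, Real.dist_eq]; ring_nf
    _ ≤ volume (fiber S 0) := measure_mono hsub

lemma volume_fiber_zero_le_two_mul_volume_fiber_half (hS : Convex ℝ S) {t₀ : ℝ} {y : E}
    (hy : (t₀, y) ∈ S) :
    volume (fiber S 0) ≤ 2 * volume (fiber S ((2 : ℝ)⁻¹ • y)) := by
  have hsub : (2⁻¹ * t₀) +ᵥ ((2 : ℝ)⁻¹ • fiber S 0) ⊆ fiber S ((2 : ℝ)⁻¹ • y) := by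
    rintro - ⟨-, ⟨t, ht, rfl⟩, rfl⟩
    have hmid := hS hy ht (by norm_num : (0 : ℝ) ≤ 2⁻¹) (by norm_num : (0 : ℝ) ≤ 2⁻¹)
      (by norm_num)
    simpa [fiber, smul_eq_mul] using hmid
  calc volume (fiber S 0) = 2 * volume ((2⁻¹ * t₀) +ᵥ ((2 : ℝ)⁻¹ • fiber S 0)) := by
        rw [measure_vadd, Measure.addHaar_smul, Module.finrank_self, pow_one, ← mul_assoc,
          ← ENNReal.ofReal_ofNat 2, ← ENNReal.ofReal_mul (by norm_num)]
        norm_num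
    _ ≤ 2 * volume (fiber S ((2 : ℝ)⁻¹ • y)) := by gcongr

variable [MeasurableSpace E] {μ : Measure E} [SFinite μ]

/-- Fubini, with every fibre bounded by the central one. -/
lemma prod_le_volume_fiber_zero_mul (hS : MeasurableSet S) (hconv : Convex ℝ S)
    (hneg : ∀ z ∈ S, -z ∈ S) :
    (volume.prod μ) S ≤ volume (fiber S 0) * μ (Prod.snd '' S) := by
  rw [Measure.prod_apply_symm hS]
  refine (lintegral_mono fun y => ?_).trans (lintegral_indicator_const_le _ _)
  by_cases hy : y ∈ Prod.snd '' S
  · rw [indicator_of_mem hy]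
    exact volume_fiber_le_volume_fiber_zero hconv hneg y
  · have hempty : (fun t => (t, y)) ⁻¹' S = ∅ :=
      eq_empty_of_forall_notMem fun t ht => hy ⟨_, ht, rfl⟩
    simp [hempty]

end AddCommGroup

end Fiber

section HalfShadow

variable {E : Type*} [NormedAddCommGroup E] [NormedSpace ℝ E]

def halfShadow (S : Set (ℝ × E)) : Set E := (2 : ℝ)⁻¹ • (Prod.snd '' S)

lemma addHaar_image_snd_eq_mul_halfShadow [MeasurableSpace E] [BorelSpace E]
    [FiniteDimensional ℝ E] (μ : Measure E) [μ.IsAddHaarMeasure] (S : Set (ℝ × E)) :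
    μ (Prod.snd '' S) = ENNReal.ofReal (2 ^ Module.finrank ℝ E) * μ (halfShadow S) := by
  rw [halfShadow, Measure.addHaar_smul, ← mul_assoc, ← ENNReal.ofReal_mul (by positivity),
    abs_of_pos (by positivity), ← mul_pow]
  norm_num

namespace IsCenteredConvexBody

variable {S : Set (ℝ × E)} {ρ R : ℝ}

protected lemma halfShadow (h : IsCenteredConvexBody S ρ R) :
    IsCenteredConvexBody (halfShadow S) (ρ / 2) R where
  isOpen := (isOpenMap_snd _ h.isOpen).smul₀ (by norm_num)
  convex := (h.convex.linear_image (LinearMap.snd ℝ ℝ E)).smul _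
  neg_mem := by
    rintro - ⟨-, ⟨z, hz, rfl⟩, rfl⟩
    exact ⟨-z.2, ⟨-z, h.neg_mem z hz, rfl⟩, smul_neg _ _⟩
  radius_pos := half_pos h.radius_pos
  ball_subset := by
    have hball : ball (0 : E) ρ ⊆ Prod.snd '' S := fun y hy =>
      ⟨(0, y), h.ball_subset (by simpa using hy), rfl⟩
    calc ball (0 : E) (ρ / 2) = (2 : ℝ)⁻¹ • ball 0 ρ := by
          rw [_root_.smul_ball (by norm_num), smul_zero]; norm_num [div_eq_inv_mul]
      _ ⊆ halfShadow S := smul_set_mono hball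
  subset_ball := by
    rintro - ⟨-, ⟨z, hz, rfl⟩, rfl⟩
    have hz' := mem_ball_zero_iff.mp (h.subset_ball hz)
    rw [mem_ball_zero_iff, norm_smul, Real.norm_of_nonneg (by norm_num)]
    linarith [norm_nonneg z.2, norm_snd_le z]

lemma ofReal_two_mul_le_volume_fiber_zero (h : IsCenteredConvexBody S ρ R) :
    ENNReal.ofReal (2 * ρ) ≤ volume (fiber S 0) := by
  rw [← Real.volume_ball 0]
  exact measure_mono fun t ht => h.ball_subset (by simpa using ht)

lemma volume_fiber_le_ofReal_two_mul (h : IsCenteredConvexBody S ρ R) (y : E) :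
    volume (fiber S y) ≤ ENNReal.ofReal (2 * R) := by
  rw [← Real.volume_ball 0]
  refine measure_mono fun t ht => ?_
  have := mem_ball_zero_iff.mp (h.subset_ball ht)
  exact mem_ball_zero_iff.mpr ((norm_fst_le _).trans_lt this)

lemma measurableSet_fiber (h : IsCenteredConvexBody S ρ R) (y : E) :
    MeasurableSet (fiber S y) :=
  (h.isOpen.preimage (Continuous.prodMk_left y)).measurableSet

lemma outer_radius_pos (h : IsCenteredConvexBody S ρ R) : 0 < R := by
  simpa using h.subset_ball (h.ball_subset (mem_ball_self h.radius_pos))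

lemma volume_fiber_zero_ne_top (h : IsCenteredConvexBody S ρ R) : volume (fiber S 0) ≠ ∞ :=
  ne_top_of_le_ne_top ofReal_ne_top (h.volume_fiber_le_ofReal_two_mul 0)

lemma volume_fiber_zero_eq_ofReal (h : IsCenteredConvexBody S ρ R) :
    volume (fiber S 0) = ENNReal.ofReal (2 * ((volume (fiber S 0)).toReal / 2)) := by
  rw [mul_div_cancel₀ _ two_ne_zero, ENNReal.ofReal_toReal h.volume_fiber_zero_ne_top]

lemma le_toReal_volume_fiber_zero_div_two (h : IsCenteredConvexBody S ρ R) :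
    ρ ≤ (volume (fiber S 0)).toReal / 2 := by
  have := ENNReal.toReal_mono h.volume_fiber_zero_ne_top h.ofReal_two_mul_le_volume_fiber_zero
  rw [ENNReal.toReal_ofReal (by linarith [h.radius_pos])] at this
  linarith

lemma toReal_volume_fiber_zero_div_two_le (h : IsCenteredConvexBody S ρ R) :
    (volume (fiber S 0)).toReal / 2 ≤ R := by
  have := ENNReal.toReal_le_of_le_ofReal (by linarith [h.outer_radius_pos])
    (h.volume_fiber_le_ofReal_two_mul 0)
  linarith

end IsCenteredConvexBody

end HalfShadow

section Cons

variable {n : ℕ}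

lemma norm_finCons (t : ℝ) (y : Fin n → ℝ) :
    ‖(Fin.cons t y : Fin (n + 1) → ℝ)‖ = max ‖t‖ ‖y‖ := by
  refine le_antisymm ((pi_norm_le_iff_of_nonneg (by positivity)).mpr fun i => ?_) ?_
  · refine Fin.cases ?_ (fun j => ?_) i
    · simp
    · simpa using (norm_le_pi_norm y j).trans (le_max_right _ _)
  · refine max_le (by simpa using norm_le_pi_norm (Fin.cons t y : Fin (n + 1) → ℝ) 0) ?_
    refine (pi_norm_le_iff_of_nonneg (norm_nonneg _)).mpr fun j => ?_
    simpa using norm_le_pi_norm (Fin.cons t y : Fin (n + 1) → ℝ) j.succ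

variable (n) in
def consIsometry : (ℝ × (Fin n → ℝ)) ≃ₗᵢ[ℝ] (Fin (n + 1) → ℝ) :=
  { Fin.consLinearEquiv ℝ fun _ : Fin (n + 1) => ℝ with
    norm_map' := fun z => (norm_finCons z.1 z.2).trans (Prod.norm_def z).symm }

@[simp]
lemma consIsometry_apply (z : ℝ × (Fin n → ℝ)) : consIsometry n z = Fin.cons z.1 z.2 := rfl

lemma volume_preimage_consIsometry (K : Set (Fin (n + 1) → ℝ)) :
    volume (consIsometry n ⁻¹' K) = volume K := by
  have hcons : ⇑(consIsometry n) = (MeasurableEquiv.piFinSuccAbove (fun _ => ℝ) 0).symm := by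
    funext z
    simp [MeasurableEquiv.piFinSuccAbove, Fin.insertNthEquiv, Fin.insertNth_zero']
  rw [hcons,
    (volume_preserving_piFinSuccAbove (fun _ : Fin (n + 1) => ℝ) 0).symm.measure_preimage_equiv]

end Cons

section MixedNorm

lemma lpStep_mono {p : ℝ≥0∞} {g h : ℝ → ℝ≥0∞} (hgh : ∀ t, g t ≤ h t) :
    lpStep p g ≤ lpStep p h := by
  unfold lpStep
  split_ifs
  · exact essSup_mono_ae (Eventually.of_forall hgh)
  · gcongr with t
    exact hgh t

lemma lpStep_const_mul {p : ℝ≥0∞} (hp : p ≠ 0) {c : ℝ≥0∞} (hc : c ≠ ∞) (g : ℝ → ℝ≥0∞) :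
    lpStep p (fun t => c * g t) = c * lpStep p g := by
  unfold lpStep
  split_ifs with htop
  · exact ENNReal.essSup_const_mul
  · have hs : 0 < p.toReal := ENNReal.toReal_pos hp htop
    simp only [ENNReal.mul_rpow_of_nonneg _ _ hs.le]
    rw [lintegral_const_mul' _ _ (ENNReal.rpow_ne_top_of_nonneg hs.le hc),
      ENNReal.mul_rpow_of_nonneg _ _ (by positivity), ← ENNReal.rpow_mul,
      mul_one_div_cancel hs.ne', ENNReal.rpow_one]

lemma lpStep_eq_eLpNorm {p : ℝ≥0∞} (hp : p ≠ 0) (g : ℝ → ℝ≥0∞) :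
    lpStep p g = eLpNorm g p volume := by
  unfold lpStep
  split_ifs with htop
  · simp [htop, eLpNorm, eLpNormEssSup]
  · simp [eLpNorm, hp, htop, eLpNorm']

lemma lpStep_indicator_one {p : ℝ≥0∞} (hp : p ≠ 0) {S : Set ℝ} (hS : MeasurableSet S)
    (hS₀ : volume S ≠ 0) :
    lpStep p (S.indicator fun _ => 1) = volume S ^ (p.toReal)⁻¹ := by
  rw [lpStep_eq_eLpNorm hp, eLpNorm_indicator_const' hS hS₀ hp, enorm_eq_self, one_mul, one_div]

lemma mixedNorm_mono : ∀ {n : ℕ} (p : Fin n → ℝ≥0∞) {F G : (Fin n → ℝ) → ℝ≥0∞},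
    (∀ x, F x ≤ G x) → mixedNorm n p F ≤ mixedNorm n p G
  | 0, _, _, _, h => h _
  | _ + 1, p, _, _, h =>
    mixedNorm_mono (fun i => p i.succ) fun x => lpStep_mono fun t => h (Fin.cons t x)

lemma mixedNorm_const_mul : ∀ {n : ℕ} {p : Fin n → ℝ≥0∞}, (∀ i, p i ≠ 0) →
    ∀ {c : ℝ≥0∞}, c ≠ ∞ → ∀ F, mixedNorm n p (fun x => c * F x) = c * mixedNorm n p F
  | 0, _, _, _, _, _ => rfl
  | _ + 1, p, hp, _, hc, F => by
    simp only [mixedNorm, lpStep_const_mul (hp 0) hc]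
    exact mixedNorm_const_mul (fun i => hp i.succ) hc _

lemma chiNorm_succ {n : ℕ} (p : Fin (n + 1) → ℝ≥0∞) (K : Set (Fin (n + 1) → ℝ)) :
    chiNorm p K = mixedNorm n (fun i => p i.succ)
      fun y => lpStep (p 0) ((fiber (consIsometry n ⁻¹' K) y).indicator fun _ => 1) :=
  rfl

lemma rpow_mul_chiNorm_le_chiNorm_succ {n : ℕ} {p : Fin (n + 1) → ℝ≥0∞} (hp : ∀ i, p i ≠ 0)
    {K : Set (Fin (n + 1) → ℝ)} {T : Set (Fin n → ℝ)} {c : ℝ≥0∞} (hc₀ : c ≠ 0) (hc : c ≠ ∞)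
    (hfiber : ∀ y ∈ T, MeasurableSet (fiber (consIsometry n ⁻¹' K) y) ∧
      c ≤ volume (fiber (consIsometry n ⁻¹' K) y)) :
    c ^ (p 0).toReal⁻¹ * chiNorm (fun i => p i.succ) T ≤ chiNorm p K := by
  rw [chiNorm, ← mixedNorm_const_mul (fun i => hp i.succ)
    (ENNReal.rpow_ne_top_of_nonneg (by positivity) hc), chiNorm_succ]
  refine mixedNorm_mono _ fun y => ?_
  by_cases hy : y ∈ T
  · obtain ⟨hmeas, hle⟩ := hfiber y hy
    rw [indicator_of_mem hy, mul_one,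
      lpStep_indicator_one (hp 0) hmeas (ne_bot_of_le_ne_bot hc₀ hle)]
    gcongr
  · simp [indicator_of_notMem hy]

end MixedNorm

section Sides

/-- `sides n K i` is half the length of the central fibre, in the `i`-th coordinate direction,
of the `i`-th iterated half-shadow of `K`. -/
def sides : (n : ℕ) → Set (Fin n → ℝ) → Fin n → ℝ
  | 0, _ => finZeroElim
  | n + 1, K => Fin.cons ((volume (fiber (consIsometry n ⁻¹' K) 0)).toReal / 2)
      (sides n (halfShadow (consIsometry n ⁻¹' K)))

@[simp]
lemma sides_succ_zero {n : ℕ} (K : Set (Fin (n + 1) → ℝ)) :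
    sides (n + 1) K 0 = (volume (fiber (consIsometry n ⁻¹' K) 0)).toReal / 2 :=
  rfl

@[simp]
lemma sides_succ_succ {n : ℕ} (K : Set (Fin (n + 1) → ℝ)) (i : Fin n) :
    sides (n + 1) K i.succ = sides n (halfShadow (consIsometry n ⁻¹' K)) i :=
  rfl

namespace IsCenteredConvexBody

lemma div_two_pow_le_sides : ∀ {n : ℕ} {K : Set (Fin n → ℝ)} {ρ R : ℝ},
    IsCenteredConvexBody K ρ R → ∀ i, ρ / 2 ^ n ≤ sides n K i
  | 0, _, _, _, _, i => i.elim0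
  | n + 1, _, _, _, h, i => by
    have hS := h.preimage (consIsometry n)
    refine Fin.cases ?_ (fun j => ?_) i
    · exact (div_le_self hS.radius_pos.le (one_le_pow₀ one_le_two)).trans
        hS.le_toReal_volume_fiber_zero_div_two
    · simpa [pow_succ', div_div] using div_two_pow_le_sides hS.halfShadow j

lemma sides_pos {n : ℕ} {K : Set (Fin n → ℝ)} {ρ R : ℝ}
    (h : IsCenteredConvexBody K ρ R) (i : Fin n) : 0 < sides n K i :=
  (div_pos h.radius_pos (by positivity)).trans_le (h.div_two_pow_le_sides i)

lemma sides_le : ∀ {n : ℕ} {K : Set (Fin n → ℝ)} {ρ R : ℝ},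
    IsCenteredConvexBody K ρ R → ∀ i, sides n K i ≤ R
  | 0, _, _, _, _, i => i.elim0
  | n + 1, _, _, _, h, i => by
    have hS := h.preimage (consIsometry n)
    refine Fin.cases ?_ (fun j => ?_) i
    · exact hS.toReal_volume_fiber_zero_div_two_le
    · simpa using sides_le hS.halfShadow j

lemma volume_le_prod_sides : ∀ {n : ℕ} {K : Set (Fin n → ℝ)} {ρ R : ℝ},
    IsCenteredConvexBody K ρ R → volume K ≤ ENNReal.ofReal (2 ^ (n * n) * ∏ i, sides n K i)
  | 0, K, _, _, _ => by
    simpa [volume_pi] using measure_mono (μ := volume) (subset_univ K)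
  | n + 1, K, ρ, R, h => by
    set S := consIsometry n ⁻¹' K
    have hS : IsCenteredConvexBody S ρ R := h.preimage (consIsometry n)
    set a₀ := (volume (fiber S 0)).toReal / 2
    have ha₀ : 0 ≤ a₀ := hS.radius_pos.le.trans hS.le_toReal_volume_fiber_zero_div_two
    have hprod : 0 ≤ ∏ i, sides n (halfShadow S) i :=
      Finset.prod_nonneg fun i _ => (hS.halfShadow.sides_pos i).le
    have hpow : (2 : ℝ) * 2 ^ n * 2 ^ (n * n) ≤ 2 ^ ((n + 1) * (n + 1)) := by
      rw [← pow_succ', ← pow_add]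
      exact pow_le_pow_right₀ one_le_two (by nlinarith)
    calc volume K = (volume.prod volume) S := by
          rw [← Measure.volume_eq_prod, volume_preimage_consIsometry]
      _ ≤ volume (fiber S 0) * volume (Prod.snd '' S) :=
          prod_le_volume_fiber_zero_mul hS.isOpen.measurableSet hS.convex hS.neg_mem
      _ = ENNReal.ofReal (2 * a₀) * (ENNReal.ofReal (2 ^ n) * volume (halfShadow S)) := by
          rw [← hS.volume_fiber_zero_eq_ofReal, addHaar_image_snd_eq_mul_halfShadow,
            Module.finrank_fin_fun]
      _ ≤ ENNReal.ofReal (2 * a₀) * (ENNReal.ofReal (2 ^ n) *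
            ENNReal.ofReal (2 ^ (n * n) * ∏ i, sides n (halfShadow S) i)) := by
          gcongr
          exact volume_le_prod_sides hS.halfShadow
      _ = ENNReal.ofReal (2 * 2 ^ n * 2 ^ (n * n) * (a₀ * ∏ i, sides n (halfShadow S) i)) := by
          rw [← ENNReal.ofReal_mul (by positivity), ← ENNReal.ofReal_mul (by positivity)]
          ring_nf
      _ ≤ ENNReal.ofReal (2 ^ ((n + 1) * (n + 1)) * ∏ i, sides (n + 1) K i) := by
          rw [Fin.prod_univ_succ, sides_succ_zero]
          simp only [sides_succ_succ]
          gcongr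

lemma ofReal_prod_rpow_sides_le_chiNorm : ∀ {n : ℕ} {p : Fin n → ℝ≥0∞},
    (∀ i, p i ≠ 0) → ∀ {K : Set (Fin n → ℝ)} {ρ R : ℝ}, IsCenteredConvexBody K ρ R →
      ENNReal.ofReal (∏ i, sides n K i ^ (p i).toReal⁻¹) ≤ chiNorm p K
  | 0, _, _, K, _, _, h => by
    rw [chiNorm, mixedNorm, Subsingleton.elim finZeroElim 0,
      indicator_of_mem (h.ball_subset (mem_ball_self h.radius_pos))]
    simp
  | n + 1, p, hp, K, ρ, R, h => by
    set S := consIsometry n ⁻¹' K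
    have hS : IsCenteredConvexBody S ρ R := h.preimage (consIsometry n)
    set a₀ := (volume (fiber S 0)).toReal / 2
    have ha₀ : 0 < a₀ := hS.radius_pos.trans_le hS.le_toReal_volume_fiber_zero_div_two
    have hfiber : ∀ y ∈ halfShadow S,
        MeasurableSet (fiber S y) ∧ ENNReal.ofReal a₀ ≤ volume (fiber S y) := by
      rintro - ⟨-, ⟨z, hz, rfl⟩, rfl⟩
      refine ⟨hS.measurableSet_fiber _, ?_⟩
      have hle := volume_fiber_zero_le_two_mul_volume_fiber_half hS.convex (t₀ := z.1) hz
      rw [hS.volume_fiber_zero_eq_ofReal, ENNReal.ofReal_mul zero_le_two,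
        ENNReal.ofReal_ofNat] at hle
      exact (ENNReal.mul_le_mul_iff_right two_ne_zero ofNat_ne_top).mp hle
    calc ENNReal.ofReal (∏ i, sides (n + 1) K i ^ (p i).toReal⁻¹)
        = ENNReal.ofReal a₀ ^ (p 0).toReal⁻¹ *
            ENNReal.ofReal (∏ i, sides n (halfShadow S) i ^ (p i.succ).toReal⁻¹) := by
          rw [Fin.prod_univ_succ, ENNReal.ofReal_mul (by positivity),
            ENNReal.ofReal_rpow_of_nonneg ha₀.le (by positivity)]
          rfl
      _ ≤ ENNReal.ofReal a₀ ^ (p 0).toReal⁻¹ * chiNorm (fun i => p i.succ) (halfShadow S) := by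
          gcongr
          exact ofReal_prod_rpow_sides_le_chiNorm (fun i => hp i.succ)
            hS.halfShadow
      _ ≤ chiNorm p K :=
          rpow_mul_chiNorm_le_chiNorm_succ hp (ENNReal.ofReal_pos.mpr ha₀).ne' ofReal_ne_top hfiber

end IsCenteredConvexBody

end Sides

section Exponents

variable {ι : Type*} {p : ι → ℝ≥0∞}

lemma inv_toReal_iSup_le {i : ι} (hpi : p i ≠ 0) :
    ((⨆ j, p j).toReal)⁻¹ ≤ ((p i).toReal)⁻¹ := by
  rw [← ENNReal.toReal_inv, ← ENNReal.toReal_inv]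
  exact ENNReal.toReal_mono (ENNReal.inv_ne_top.mpr hpi) (ENNReal.inv_le_inv.mpr (le_iSup p i))

lemma inv_toReal_le_inv_toReal_iInf [Finite ι] (hp : ∀ j, p j ≠ 0) (i : ι) :
    ((p i).toReal)⁻¹ ≤ ((⨅ j, p j).toReal)⁻¹ := by
  have : Nonempty ι := ⟨i⟩
  obtain ⟨j, hj⟩ := Finite.exists_min p
  have hinf : ⨅ j, p j = p j := le_antisymm (iInf_le p j) (le_iInf hj)
  rw [← ENNReal.toReal_inv, ← ENNReal.toReal_inv]
  refine ENNReal.toReal_mono ?_ (ENNReal.inv_le_inv.mpr (iInf_le p i))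
  rw [hinf]
  exact ENNReal.inv_ne_top.mpr (hp j)

lemma rpow_mul_rpow_le_rpow {a c u e v : ℝ} (hc : 0 < c) (hc₁ : c ≤ 1) (hca : c ≤ a)
    (hu : 0 ≤ u) (hue : u ≤ e) (hev : e ≤ v) : c ^ v * a ^ u ≤ a ^ e := by
  have ha : 0 < a := hc.trans_le hca
  rcases le_or_gt 1 a with ha₁ | ha₁
  · calc c ^ v * a ^ u ≤ 1 * a ^ e :=
          mul_le_mul (Real.rpow_le_one hc.le hc₁ (by linarith))
            (Real.rpow_le_rpow_of_exponent_le ha₁ hue) (by positivity) zero_le_one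
      _ = a ^ e := one_mul _
  · calc c ^ v * a ^ u ≤ a ^ e * 1 := by
          refine mul_le_mul ?_ (Real.rpow_le_one ha.le ha₁.le hu) (by positivity) (by positivity)
          exact (Real.rpow_le_rpow_of_exponent_ge hc hc₁ hev).trans
            (Real.rpow_le_rpow hc.le hca (by linarith))
      _ = a ^ e := mul_one _

lemma div_rpow_le_rpow {a D e v : ℝ} (ha : 0 < a) (haD : a ≤ D) (hD : 1 ≤ D) (he : 0 ≤ e)
    (hev : e ≤ v) : (a / D) ^ v ≤ a ^ e := by
  have hD₀ : 0 < D := one_pos.trans_le hD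
  calc (a / D) ^ v ≤ (a / D) ^ e :=
        Real.rpow_le_rpow_of_exponent_ge (div_pos ha hD₀) ((div_le_one hD₀).mpr haD) hev
    _ ≤ a ^ e := Real.rpow_le_rpow (div_pos ha hD₀).le (div_le_self ha.le hD) he

end Exponents

section LowerBounds

variable {n : ℕ} {p : Fin n → ℝ≥0∞}

lemma IsCenteredConvexBody.toReal_volume_div_le_prod_sides {K : Set (Fin n → ℝ)} {ρ R : ℝ}
    (hK : IsCenteredConvexBody K ρ R) : (volume K).toReal / 2 ^ (n * n) ≤ ∏ i, sides n K i := by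
  rw [div_le_iff₀' (by positivity)]
  exact ENNReal.toReal_le_of_le_ofReal
    (mul_nonneg (by positivity) (Finset.prod_nonneg fun i _ => (hK.sides_pos i).le))
    hK.volume_le_prod_sides

lemma exists_pos_mul_rpow_le_chiNorm_of_ball_subset (hp : ∀ i, p i ≠ 0) {ρ : ℝ} (hρ : 0 < ρ) :
    ∃ c > 0, ∀ (K : Set (Fin n → ℝ)) (R : ℝ), IsCenteredConvexBody K ρ R →
      ENNReal.ofReal (c * (volume K).toReal ^ ((⨆ i, p i).toReal)⁻¹) ≤ chiNorm p K := by
  set u := ((⨆ i, p i).toReal)⁻¹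
  set v := ((⨅ i, p i).toReal)⁻¹
  set δ := min (ρ / 2 ^ n) 1
  have hδ : 0 < δ := lt_min (by positivity) one_pos
  refine ⟨(δ ^ v) ^ n * ((2 ^ (n * n) : ℝ)⁻¹) ^ u, by positivity, fun K R hK => ?_⟩
  refine le_trans (ENNReal.ofReal_le_ofReal ?_) (hK.ofReal_prod_rpow_sides_le_chiNorm hp)
  have ha : ∀ i, 0 ≤ sides n K i := fun i => (hK.sides_pos i).le
  calc (δ ^ v) ^ n * ((2 ^ (n * n) : ℝ)⁻¹) ^ u * (volume K).toReal ^ u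
      = (δ ^ v) ^ n * ((volume K).toReal / 2 ^ (n * n)) ^ u := by
        rw [div_eq_inv_mul, Real.mul_rpow (by positivity) ENNReal.toReal_nonneg, mul_assoc]
    _ ≤ (δ ^ v) ^ n * (∏ i, sides n K i) ^ u := by
        gcongr
        exact hK.toReal_volume_div_le_prod_sides
    _ = ∏ i, δ ^ v * sides n K i ^ u := by
        rw [Finset.prod_mul_distrib, Finset.prod_const, Finset.card_univ, Fintype.card_fin,
          Real.finsetProd_rpow _ _ fun i _ => ha i]
    _ ≤ ∏ i, sides n K i ^ (p i).toReal⁻¹ :=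
        Finset.prod_le_prod (fun i _ => mul_nonneg (by positivity) (Real.rpow_nonneg (ha i) _))
          fun i _ => rpow_mul_rpow_le_rpow hδ (min_le_right _ _)
            ((min_le_left _ _).trans (hK.div_two_pow_le_sides i)) (by positivity)
            (inv_toReal_iSup_le (hp i)) (inv_toReal_le_inv_toReal_iInf hp i)

lemma exists_pos_mul_rpow_le_chiNorm_of_subset_ball (hp : ∀ i, p i ≠ 0) (R : ℝ) :
    ∃ c > 0, ∀ (K : Set (Fin n → ℝ)) (ρ : ℝ), IsCenteredConvexBody K ρ R →
      ENNReal.ofReal (c * (volume K).toReal ^ ((⨅ i, p i).toReal)⁻¹) ≤ chiNorm p K := by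
  set v := ((⨅ i, p i).toReal)⁻¹
  set D := max R 1
  have hD : 1 ≤ D := le_max_right _ _
  refine ⟨((2 ^ (n * n) * D ^ n : ℝ)⁻¹) ^ v, by positivity, fun K ρ hK => ?_⟩
  refine le_trans (ENNReal.ofReal_le_ofReal ?_) (hK.ofReal_prod_rpow_sides_le_chiNorm hp)
  have ha : ∀ i, 0 < sides n K i := hK.sides_pos
  calc ((2 ^ (n * n) * D ^ n : ℝ)⁻¹) ^ v * (volume K).toReal ^ v
      = ((volume K).toReal / 2 ^ (n * n) / D ^ n) ^ v := by
        rw [← Real.mul_rpow (by positivity) ENNReal.toReal_nonneg, div_div, inv_mul_eq_div]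
    _ ≤ ((∏ i, sides n K i) / D ^ n) ^ v := by
        gcongr
        exact hK.toReal_volume_div_le_prod_sides
    _ = ∏ i, (sides n K i / D) ^ v := by
        rw [Real.finsetProd_rpow _ _ fun i _ => (div_pos (ha i) (by positivity)).le,
          Finset.prod_div_distrib, Finset.prod_const, Finset.card_univ, Fintype.card_fin]
    _ ≤ ∏ i, sides n K i ^ (p i).toReal⁻¹ :=
        Finset.prod_le_prod (fun i _ => Real.rpow_nonneg (div_pos (ha i) (by positivity)).le _)
          fun i _ => div_rpow_le_rpow (ha i) ((hK.sides_le i).trans (le_max_left _ _)) hD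
            (by positivity) (inv_toReal_le_inv_toReal_iInf hp i)

end LowerBounds

lemma Matrix.det_zpow {ι 𝕜 : Type*} [Fintype ι] [DecidableEq ι] [Field 𝕜] (A : Matrix ι ι 𝕜)
    (k : ℤ) : (A ^ k).det = A.det ^ k := by
  cases k with
  | ofNat j => simp [Matrix.det_pow]
  | negSucc j =>
    rw [zpow_negSucc, Matrix.det_nonsing_inv, Matrix.det_pow, zpow_negSucc, Ring.inverse_eq_inv]

section Dilation

variable {n : ℕ} {A : Matrix (Fin n) (Fin n) ℝ} {Δ : Set (Fin n → ℝ)}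

lemma Bk_zero (A : Matrix (Fin n) (Fin n) ℝ) (Δ : Set (Fin n → ℝ)) : Bk A Δ 0 = Δ := by
  simp [Bk]

lemma volume_Bk (hΔ : volume Δ = 1) (k : ℤ) :
    volume (Bk A Δ k) = ENNReal.ofReal (|A.det| ^ (k : ℝ)) := by
  rw [Real.rpow_intCast, ← abs_zpow, ← Matrix.det_zpow, Bk,
    show (fun x => (A ^ k).mulVec x) = Matrix.toLin' (A ^ k) from rfl,
    Measure.addHaar_image_linearMap, LinearMap.det_toLin', hΔ, mul_one]

lemma Bk_monotone (hA : IsUnit A.det) (hΔ : Δ ⊆ (fun x => A.mulVec x) '' Δ) :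
    Monotone (Bk A Δ) :=
  monotone_int_of_le_succ fun k => by
    have hsucc :
        Bk A Δ (k + 1) = (fun x => (A ^ k).mulVec x) '' ((fun x => A.mulVec x) '' Δ) := by
      simp [Bk, Matrix.zpow_add_one hA, image_image, Matrix.mulVec_mulVec]
    exact hsucc ▸ image_mono hΔ

lemma exists_isCenteredConvexBody_Bk {ρ R : ℝ} (hΔ : IsCenteredConvexBody Δ ρ R)
    (hA : IsUnit A.det) (k : ℤ) : ∃ ρ' R', IsCenteredConvexBody (Bk A Δ k) ρ' R' := by
  have hdet : LinearMap.det (Matrix.toLin' (A ^ k)) ≠ 0 := by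
    rw [LinearMap.det_toLin']
    exact (hA.det_zpow k).ne_zero
  exact hΔ.exists_image ((Matrix.toLin' (A ^ k)).equivOfDetNeZero hdet).toContinuousLinearEquiv

lemma IsDilationSetup.exists_isCenteredConvexBody {r : ℝ} (h : IsDilationSetup A Δ r) :
    ∃ ρ R, IsCenteredConvexBody Δ ρ R := by
  obtain ⟨ρ, hρ, hball⟩ := Metric.isOpen_iff.mp h.isOpen 0 h.zero_mem
  obtain ⟨R, hR⟩ := h.bounded.subset_ball 0
  exact ⟨ρ, R, h.isOpen, h.convex, h.symmetric, hρ, hball, hR⟩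

lemma IsDilationSetup.exists_pos_mul_min_rpow_le_chiNorm {r : ℝ} (h : IsDilationSetup A Δ r)
    {p : Fin n → ℝ≥0∞} (hp : ∀ i, p i ≠ 0) :
    ∃ c > 0, ∀ k : ℤ, ENNReal.ofReal (c * min (|A.det| ^ ((k : ℝ) * ((⨆ i, p i).toReal)⁻¹))
      (|A.det| ^ ((k : ℝ) * ((⨅ i, p i).toReal)⁻¹))) ≤ chiNorm p (Bk A Δ k) := by
  obtain ⟨ρ, R, hΔ⟩ := h.exists_isCenteredConvexBody
  obtain ⟨c₁, hc₁, hball⟩ := exists_pos_mul_rpow_le_chiNorm_of_ball_subset hp hΔ.radius_pos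
  obtain ⟨c₂, hc₂, hsub⟩ := exists_pos_mul_rpow_le_chiNorm_of_subset_ball hp R
  have hmono := Bk_monotone h.det_isUnit (h.subset_smul.trans h.smul_subset)
  refine ⟨min c₁ c₂, lt_min hc₁ hc₂, fun k => ?_⟩
  obtain ⟨ρ', R', hB⟩ := exists_isCenteredConvexBody_Bk hΔ h.det_isUnit k
  have hvol : (volume (Bk A Δ k)).toReal = |A.det| ^ (k : ℝ) := by
    rw [volume_Bk h.volume_eq_one, ENNReal.toReal_ofReal (by positivity)]
  rcases le_or_gt 0 k with hk | hk
  · have hB' : IsCenteredConvexBody (Bk A Δ k) ρ R' :=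
      { hB with
        radius_pos := hΔ.radius_pos
        ball_subset := hΔ.ball_subset.trans (by simpa only [Bk_zero] using hmono hk) }
    refine le_trans (ENNReal.ofReal_le_ofReal ?_) (hball _ _ hB')
    rw [hvol, ← Real.rpow_mul (abs_nonneg _)]
    gcongr
    exacts [min_le_left _ _, min_le_left _ _]
  · have hB' : IsCenteredConvexBody (Bk A Δ k) ρ' R :=
      { hB with
        subset_ball := (hmono hk.le).trans (by simpa only [Bk_zero] using hΔ.subset_ball) }
    refine le_trans (ENNReal.ofReal_le_ofReal ?_) (hsub _ _ hB')
    rw [hvol, ← Real.rpow_mul (abs_nonneg _)]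
    gcongr
    exacts [min_le_right _ _, min_le_right _ _]

end Dilation

theorem chiNorm_inv_le_general {n : ℕ}
    (A : Matrix (Fin n) (Fin n) ℝ) (Δ : Set (Fin n → ℝ)) (r : ℝ)
    (h : IsDilationSetup A Δ r) (p : Fin n → ℝ≥0∞) (hp : ∀ i, 0 < p i) :
    ∃ C : ℝ, 0 < C ∧ ∀ k : ℤ,
      (chiNorm p (Bk A Δ k))⁻¹ ≤
        ENNReal.ofReal (C * max (|A.det| ^ (-(k : ℝ) / (⨅ i, p i).toReal))
          (|A.det| ^ (-(k : ℝ) / (⨆ i, p i).toReal))) := by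
  obtain ⟨c, hc, hlow⟩ := h.exists_pos_mul_min_rpow_le_chiNorm fun i => (hp i).ne'
  refine ⟨c⁻¹, inv_pos.mpr hc, fun k => ?_⟩
  have hb : 0 < |A.det| := abs_pos.mpr h.det_isUnit.ne_zero
  set x := |A.det| ^ ((k : ℝ) * ((⨆ i, p i).toReal)⁻¹)
  set y := |A.det| ^ ((k : ℝ) * ((⨅ i, p i).toReal)⁻¹)
  have hmin : 0 < min x y := lt_min (by positivity) (by positivity)
  have hmax : (min x y)⁻¹ ≤ max (|A.det| ^ (-(k : ℝ) / (⨅ i, p i).toReal))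
      (|A.det| ^ (-(k : ℝ) / (⨆ i, p i).toReal)) := by
    simp only [div_eq_mul_inv, neg_mul, Real.rpow_neg hb.le]
    rcases min_choice x y with hxy | hxy <;> rw [hxy]
    exacts [le_max_right _ _, le_max_left _ _]
  calc (chiNorm p (Bk A Δ k))⁻¹ ≤ (ENNReal.ofReal (c * min x y))⁻¹ :=
        ENNReal.inv_le_inv.mpr (hlow k)
    _ = ENNReal.ofReal (c⁻¹ * (min x y)⁻¹) := by
        rw [← ENNReal.ofReal_inv_of_pos (by positivity), mul_inv]
    _ ≤ _ := by gcongr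

/-- There is `C > 0` such that for every `k ∈ ℤ`,
`‖χ_{B_k}‖_{L^{p⃗}}⁻¹ ≤ C max{ b^{-k/p₋}, b^{-k/p₊} }`. -/
theorem chiNorm_inv_le {n : ℕ} (hn : 0 < n)
    (A : Matrix (Fin n) (Fin n) ℝ) (Δ : Set (Fin n → ℝ)) (r : ℝ)
    (h : IsDilationSetup A Δ r) (p : Fin n → ℝ≥0∞) (hp : ∀ i, 0 < p i) :
    ∃ C : ℝ, 0 < C ∧ ∀ k : ℤ,
      (chiNorm p (Bk A Δ k))⁻¹ ≤
        ENNReal.ofReal (C * max (|A.det| ^ (-(k : ℝ) / (⨅ i, p i).toReal))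
          (|A.det| ^ (-(k : ℝ) / (⨆ i, p i).toReal))) :=
  chiNorm_inv_le_general A Δ r h p hp
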